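/- arXiv:2408.12386 — 2 statements merged into one kernel-verified Lean document; each statement's English description precedes it below -/
import Mathlib

section
/- Let $f_P(x)=8x^3+10x^2+3x+1$ and define $f_{P^{k+1}} = f_P\diamond f_{P^k}$ with $f_{P^1}=f_P$, where $(f\diamond g)(x)=\sum_{j\ge 0}\frac{f^{(j)}(x)}{j!}\frac{g^{(j)}(x)}{j!}x^j(x+1)^j$. Writing $f_{P^k}(x)=\sum_{\ell=0}^{3k}f_{k,\ell}x^\ell$, the coefficients satisfy $f_{k+1,0}=f_{k,0}$, $f_{k+1,1}=3f_{k,0}+4f_{k,1}$, and $f_{k+1,2}=10f_{k,0}+26f_{k,1}+17f_{k,2}$ for all $k\ge 1$. -/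
open Polynomial

/-- The diamond product
`(f ⋄ g)(x) = ∑_{j ≥ 0} f^{(j)}(x)/j! ⋅ g^{(j)}(x)/j! ⋅ x^j (x+1)^j`. -/
noncomputable def diamond (f g : Polynomial ℝ) : Polynomial ℝ :=
  ∑ j ∈ Finset.range (f.natDegree + g.natDegree + 1),
    Polynomial.C (((j.factorial : ℝ))⁻¹ * ((j.factorial : ℝ))⁻¹) *
      (Polynomial.derivative^[j] f) * (Polynomial.derivative^[j] g) *
      (Polynomial.X * (Polynomial.X + 1)) ^ j

/-!
The `j`-th term of `f ⋄ g` is divisible by `(x (x + 1))^j`, so the coefficients of degree `≤ 2`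
of `f ⋄ g` come from the terms `j ≤ 2` alone and are explicit bilinear expressions in the
coefficients of degree `≤ 2` of `f` and `g`. Substituting the low coefficients `1, 3, 10` of `f_P`
gives the recursion.
-/

namespace Polynomial

variable {R : Type*} [Semiring R] (p : R[X])

theorem coeff_mul_X_mul_X_add_one_pow (i j : ℕ) :
    (p * (X * (X + 1)) ^ j).coeff i = if j ≤ i then (p * (X + 1) ^ j).coeff (i - j) else 0 := by
  rw [(commute_X _).mul_pow, ← mul_assoc, (commute_X_pow _ _).right_comm, coeff_mul_X_pow']

theorem coeff_mul_X_mul_X_add_one_add_two (n : ℕ) :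
    (p * (X * (X + 1))).coeff (n + 2) = p.coeff n + p.coeff (n + 1) := by
  rw [mul_add_one, ← sq, mul_add, coeff_add, coeff_mul_X_pow, coeff_mul_X]

end Polynomial

noncomputable def diamondTerm (f g : ℝ[X]) (j : ℕ) : ℝ[X] :=
  C ((j.factorial : ℝ)⁻¹ * (j.factorial : ℝ)⁻¹) * derivative^[j] f * derivative^[j] g *
    (X * (X + 1)) ^ j

section

variable (f g : ℝ[X])

theorem diamond_eq_sum_diamondTerm :
    diamond f g = ∑ j ∈ Finset.range (f.natDegree + g.natDegree + 1), diamondTerm f g j :=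
  rfl

theorem diamondTerm_zero : diamondTerm f g 0 = f * g := by
  simp [diamondTerm]

theorem diamondTerm_one : diamondTerm f g 1 = derivative f * derivative g * (X * (X + 1)) := by
  simp [diamondTerm]

theorem diamondTerm_eq_zero_of_natDegree_lt {j : ℕ} (h : f.natDegree < j) :
    diamondTerm f g j = 0 := by
  simp [diamondTerm, iterate_derivative_eq_zero h]

theorem coeff_diamondTerm_of_lt {i j : ℕ} (h : i < j) : (diamondTerm f g j).coeff i = 0 := by
  rw [diamondTerm, coeff_mul_X_mul_X_add_one_pow, if_neg (by omega)]

theorem coeff_diamondTerm_self (j : ℕ) :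
    (diamondTerm f g j).coeff j =
      ((j.factorial : ℝ)⁻¹ * (derivative^[j] f).coeff 0) *
        ((j.factorial : ℝ)⁻¹ * (derivative^[j] g).coeff 0) := by
  rw [diamondTerm, coeff_mul_X_mul_X_add_one_pow, if_pos le_rfl, Nat.sub_self]
  simp [coeff_zero_eq_eval_zero]
  ring

theorem coeff_diamond (i : ℕ) :
    (diamond f g).coeff i = ∑ j ∈ Finset.range (i + 1), (diamondTerm f g j).coeff i := by
  set M := f.natDegree + g.natDegree + i + 2
  have sum_eq_sum_range_M : ∀ n ≤ M, (∀ j, n ≤ j → (diamondTerm f g j).coeff i = 0) →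
      ∑ j ∈ Finset.range n, (diamondTerm f g j).coeff i =
        ∑ j ∈ Finset.range M, (diamondTerm f g j).coeff i := fun n hn hzero =>
    Finset.sum_subset (by simpa using hn) fun j _ hj => hzero j (by simpa using hj)
  rw [diamond_eq_sum_diamondTerm, finsetSum_coeff, sum_eq_sum_range_M _ (by omega),
    sum_eq_sum_range_M (i + 1) (by omega)]
  · exact fun j hj => coeff_diamondTerm_of_lt f g (by omega)
  · intro j hj
    rw [diamondTerm_eq_zero_of_natDegree_lt f g (by omega), coeff_zero]

theorem coeff_zero_diamond : (diamond f g).coeff 0 = f.coeff 0 * g.coeff 0 := by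
  simp [coeff_diamond, diamondTerm_zero]

theorem coeff_one_diamond :
    (diamond f g).coeff 1 =
      f.coeff 0 * g.coeff 1 + f.coeff 1 * g.coeff 0 + f.coeff 1 * g.coeff 1 := by
  simp [coeff_diamond, Finset.sum_range_succ, diamondTerm_zero, coeff_diamondTerm_self,
    mul_coeff_one, coeff_derivative]

theorem coeff_two_diamond :
    (diamond f g).coeff 2 =
      f.coeff 0 * g.coeff 2 + f.coeff 1 * g.coeff 1 + f.coeff 2 * g.coeff 0
        + 2 * f.coeff 1 * g.coeff 2 + 2 * f.coeff 2 * g.coeff 1 + f.coeff 1 * g.coeff 1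
        + f.coeff 2 * g.coeff 2 := by
  simp only [coeff_diamond, Finset.sum_range_succ, Finset.sum_range_zero, zero_add,
    diamondTerm_zero, diamondTerm_one, coeff_mul_X_mul_X_add_one_add_two, coeff_diamondTerm_self]
  simp [coeff_derivative, coeff_mul, Finset.Nat.sum_antidiagonal_eq_sum_range_succ_mk,
    Finset.sum_range_succ]
  ring

end

theorem reeve_diamond_recursion_general (fP : Polynomial ℝ)
    (hfP : fP = 8 * Polynomial.X ^ 3 + 10 * Polynomial.X ^ 2 + 3 * Polynomial.X + 1)
    (F : ℕ → Polynomial ℝ)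
    (hFk : ∀ k, 1 ≤ k → F (k + 1) = diamond fP (F k)) :
    ∀ k, 1 ≤ k →
      (F (k + 1)).coeff 0 = (F k).coeff 0 ∧
      (F (k + 1)).coeff 1 = 3 * (F k).coeff 0 + 4 * (F k).coeff 1 ∧
      (F (k + 1)).coeff 2 =
        10 * (F k).coeff 0 + 26 * (F k).coeff 1 + 17 * (F k).coeff 2 := by
  obtain ⟨hfP0, hfP1, hfP2⟩ : fP.coeff 0 = 1 ∧ fP.coeff 1 = 3 ∧ fP.coeff 2 = 10 := by
    subst hfP
    norm_num [coeff_X, coeff_one]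
  intro k hk
  rw [hFk k hk, coeff_zero_diamond, coeff_one_diamond, coeff_two_diamond, hfP0, hfP1, hfP2]
  refine ⟨?_, ?_, ?_⟩ <;> ring

/-- Let `f_P = 8x^3+10x^2+3x+1` and `f_{P^{k+1}} = f_P ⋄ f_{P^k}` with
`f_{P^1} = f_P`.  The first three coefficients satisfy, for all `k ≥ 1`,
`f_{k+1,0}=f_{k,0}`, `f_{k+1,1}=3f_{k,0}+4f_{k,1}`,
`f_{k+1,2}=10f_{k,0}+26f_{k,1}+17f_{k,2}`. -/
theorem reeve_diamond_recursion (fP : Polynomial ℝ)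
    (hfP : fP = 8 * Polynomial.X ^ 3 + 10 * Polynomial.X ^ 2 + 3 * Polynomial.X + 1)
    (F : ℕ → Polynomial ℝ) (hF1 : F 1 = fP)
    (hFk : ∀ k, 1 ≤ k → F (k + 1) = diamond fP (F k)) :
    ∀ k, 1 ≤ k →
      (F (k + 1)).coeff 0 = (F k).coeff 0 ∧
      (F (k + 1)).coeff 1 = 3 * (F k).coeff 0 + 4 * (F k).coeff 1 ∧
      (F (k + 1)).coeff 2 =
        10 * (F k).coeff 0 + 26 * (F k).coeff 1 + 17 * (F k).coeff 2 :=
  reeve_diamond_recursion_general fP hfP F hFk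
end

section
/- Subdivision operator compatibility with products: define $\mathscr{E}:\mathbb{R}[x]\to\mathbb{R}[x]$ to be the linear map sending $\binom{x}{j}\mapsto x^j$ for all $j\ge 0$, and for polynomials $f,g$ define $(f\diamond g)(x)=\sum_{j\ge 0}\frac{f^{(j)}(x)}{j!}\frac{g^{(j)}(x)}{j!}x^j(x+1)^j$. Then for all polynomials $p,q\in\mathbb{R}[x]$, $\mathscr{E}(pq)=\mathscr{E}(p)\diamond\mathscr{E}(q)$. -/
open Polynomial

/-- The polynomial binomial coefficient `(x choose j) = x(x-1)⋯(x-j+1)/j!`. -/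
noncomputable def binomChoosePoly (j : ℕ) : Polynomial ℝ :=
  Polynomial.C ((j.factorial : ℝ)⁻¹) *
    ∏ i ∈ Finset.range j, (Polynomial.X - Polynomial.C (i : ℝ))

open Finset

-- Vandermonde corollary
lemma vand_aux (a b k : ℕ) (hka : k ≤ a) (hkb : k ≤ b) :
    ∑ t ∈ range (b - k + 1), (a - k).choose t * b.choose (k + t)
      = (a + b - k).choose (b - k) := by
  have h1 : a + b - k = (a - k) + b := by omega
  rw [h1, Nat.add_choose_eq, Finset.Nat.sum_antidiagonal_eq_sum_range_succ_mk]
  refine Finset.sum_congr rfl fun t ht => ?_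
  simp only [mem_range] at ht
  have htb : t ≤ b - k := by omega
  have : b.choose (k + t) = b.choose (b - k - t) := by
    rw [show b - k - t = b - (k + t) by omega, Nat.choose_symm (by omega)]
  rw [this]

-- key1 : ∑_j C(a,j) C(b,j) C(j,k) = C(a,k) C(a+b-k, a)
lemma key1 (a b k M : ℕ) (hka : k ≤ a) (hkb : k ≤ b) (hMa : M ≤ a) (hMb : M ≤ b)
    (hM : M = min a b) :
    ∑ j ∈ range (M + 1), a.choose j * b.choose j * j.choose k
      = a.choose k * (a + b - k).choose a := by
  have hkM : k ≤ M := by omega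
  -- restrict to Ico k (M+1)
  have step1 : ∑ j ∈ range (M + 1), a.choose j * b.choose j * j.choose k
      = ∑ j ∈ Ico k (M + 1), a.choose j * b.choose j * j.choose k := by
    refine (Finset.sum_subset (by
      intro x hx; simp only [mem_Ico] at hx; simp only [mem_range]; omega) ?_).symm
    intro x hx hnx
    simp only [mem_range] at hx
    simp only [mem_Ico, not_and, not_lt] at hnx
    have : x < k := by omega
    rw [Nat.choose_eq_zero_of_lt this, mul_zero]
  rw [step1, Finset.sum_Ico_eq_sum_range]
  have step2 : ∑ t ∈ range (M + 1 - k), a.choose (k + t) * b.choose (k + t) * (k + t).choose k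
      = ∑ t ∈ range (M + 1 - k), a.choose k * ((a - k).choose t * b.choose (k + t)) := by
    refine Finset.sum_congr rfl fun t ht => ?_
    simp only [mem_range] at ht
    have h1 : a.choose (k + t) * (k + t).choose k = a.choose k * (a - k).choose t := by
      have := Nat.choose_mul (n := a) (show k ≤ k + t by omega)
      simpa [Nat.add_sub_cancel_left] using this
    calc a.choose (k + t) * b.choose (k + t) * (k + t).choose k
        = a.choose (k + t) * (k + t).choose k * b.choose (k + t) := by ring
      _ = a.choose k * (a - k).choose t * b.choose (k + t) := by rw [h1]
      _ = a.choose k * ((a - k).choose t * b.choose (k + t)) := by ring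
  rw [step2, ← Finset.mul_sum]
  have step3 : ∑ t ∈ range (M + 1 - k), (a - k).choose t * b.choose (k + t)
      = ∑ t ∈ range (b - k + 1), (a - k).choose t * b.choose (k + t) := by
    refine Finset.sum_subset (by intro x hx; simp only [mem_range] at *; omega) ?_
    intro x hx hnx
    simp only [mem_range] at hx hnx
    have : a - k < x := by omega
    rw [Nat.choose_eq_zero_of_lt this, zero_mul]
  rw [step3, vand_aux a b k hka hkb]
  rw [Nat.choose_symm_of_eq_add (show a + b - k = a + (b - k) by omega)]



lemma key2 (n a b : ℕ) :
    n.choose a * n.choose b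
      = ∑ k ∈ range (min a b + 1), a.choose k * (a + b - k).choose a * n.choose (a + b - k) := by
  by_cases han : a ≤ n
  · have hb : n.choose b = ∑ k ∈ range (b + 1), a.choose k * (n - a).choose (b - k) := by
      conv_lhs => rw [show n = a + (n - a) by omega]
      rw [Nat.add_choose_eq, Finset.Nat.sum_antidiagonal_eq_sum_range_succ_mk]
    rw [hb, Finset.mul_sum]
    have main : ∀ k ∈ range (b + 1),
        n.choose a * (a.choose k * (n - a).choose (b - k))
          = a.choose k * (a + b - k).choose a * n.choose (a + b - k) := by
      intro k hk
      simp only [mem_range] at hk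
      by_cases h2 : a + b - k ≤ n
      · have h3 := Nat.choose_mul (n := n) (show a ≤ a + b - k by omega)
        rw [show a + b - k - a = b - k by omega] at h3
        calc n.choose a * (a.choose k * (n - a).choose (b - k))
            = a.choose k * (n.choose a * (n - a).choose (b - k)) := by ring
          _ = a.choose k * (n.choose (a + b - k) * (a + b - k).choose a) := by rw [← h3]
          _ = a.choose k * (a + b - k).choose a * n.choose (a + b - k) := by ring
      · have e1 : (n - a).choose (b - k) = 0 := Nat.choose_eq_zero_of_lt (by omega)
        have e2 : n.choose (a + b - k) = 0 := Nat.choose_eq_zero_of_lt (by omega)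
        rw [e1, e2, mul_zero, mul_zero, mul_zero]
    rw [Finset.sum_congr rfl main]
    refine (Finset.sum_subset (by intro x hx; simp only [mem_range] at *; omega) ?_).symm
    intro x hx hnx
    simp only [mem_range] at hx hnx
    have : a < x := by omega
    rw [Nat.choose_eq_zero_of_lt this, zero_mul, zero_mul]
  · rw [Nat.choose_eq_zero_of_lt (by omega), zero_mul]
    refine (Finset.sum_eq_zero fun k hk => ?_).symm
    simp only [mem_range] at hk
    rw [Nat.choose_eq_zero_of_lt (show n < a + b - k by omega), mul_zero]

lemma Anat (n a b N : ℕ) (hN : a < N) :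
    n.choose a * n.choose b = ∑ j ∈ range N, ∑ i ∈ range (j + 1),
      a.choose j * b.choose j * j.choose i * n.choose (a - j + (b - j) + j + i) := by
  set M := min a b with hM
  have hMN : M + 1 ≤ N := by omega
  -- shrink outer sum
  have shrink : ∑ j ∈ range N, ∑ i ∈ range (j + 1),
      a.choose j * b.choose j * j.choose i * n.choose (a - j + (b - j) + j + i)
      = ∑ j ∈ range (M + 1), ∑ i ∈ range (j + 1),
      a.choose j * b.choose j * j.choose i * n.choose (a - j + (b - j) + j + i) := by
    refine (Finset.sum_subset (by intro x hx; simp only [mem_range] at *; omega) ?_).symm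
    intro j hj hnj
    simp only [mem_range] at hj hnj
    refine Finset.sum_eq_zero fun i _ => ?_
    have : a < j ∨ b < j := by omega
    rcases this with h | h <;> rw [Nat.choose_eq_zero_of_lt h] <;> ring
  rw [shrink]
  -- rewrite inner sums
  have inner : ∀ j ∈ range (M + 1),
      ∑ i ∈ range (j + 1),
        a.choose j * b.choose j * j.choose i * n.choose (a - j + (b - j) + j + i)
      = ∑ i ∈ range (M + 1),
        a.choose j * b.choose j * j.choose i * n.choose (a + b - i) := by
    intro j hj
    simp only [mem_range] at hj
    have hja : j ≤ a := by omega
    have hjb : j ≤ b := by omega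
    have hrefl : ∑ i ∈ range (j + 1),
        a.choose j * b.choose j * j.choose i * n.choose (a - j + (b - j) + j + i)
        = ∑ i ∈ range (j + 1),
        a.choose j * b.choose j * j.choose i * n.choose (a + b - i) := by
      rw [← Finset.sum_range_reflect]
      refine Finset.sum_congr rfl fun i hi => ?_
      simp only [mem_range] at hi
      have hij : i ≤ j := by omega
      rw [show j + 1 - 1 - i = j - i by omega, Nat.choose_symm hij,
        show a - j + (b - j) + j + (j - i) = a + b - i by omega]
    rw [hrefl]
    refine Finset.sum_subset (by intro x hx; simp only [mem_range] at *; omega) ?_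
    intro i hi hni
    simp only [mem_range] at hi hni
    rw [Nat.choose_eq_zero_of_lt (show j < i by omega)]
    ring
  rw [Finset.sum_congr rfl inner, Finset.sum_comm]
  have final : ∀ i ∈ range (M + 1),
      ∑ j ∈ range (M + 1), a.choose j * b.choose j * j.choose i * n.choose (a + b - i)
        = a.choose i * (a + b - i).choose a * n.choose (a + b - i) := by
    intro i hi
    simp only [mem_range] at hi
    rw [← Finset.sum_mul, key1 a b i M (by omega) (by omega) (by omega) (by omega) hM]
  rw [Finset.sum_congr rfl final, ← key2]

lemma prod_X_sub_C_eq (m : ℕ) :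
    (∏ i ∈ Finset.range m, (X - Polynomial.C (i : ℝ))) = descPochhammer ℝ m := by
  induction m with
  | zero => simp [descPochhammer_zero]
  | succ k ih =>
      rw [Finset.prod_range_succ, ih, descPochhammer_succ_right]
      norm_cast

lemma binom_eval (m n : ℕ) :
    (binomChoosePoly m).eval (n : ℝ) = (n.choose m : ℝ) := by
  rw [binomChoosePoly, prod_X_sub_C_eq, eval_mul, eval_C,
    descPochhammer_eval_eq_descFactorial ℝ n m,
    Nat.descFactorial_eq_factorial_mul_choose]
  push_cast
  rw [← mul_assoc, inv_mul_cancel₀ (by positivity : ((m.factorial : ℝ)) ≠ 0), one_mul]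

noncomputable def Bop (f : Polynomial ℝ) : Polynomial ℝ :=
  f.sum fun j a => Polynomial.C a * binomChoosePoly j

lemma Bop_eq (f : Polynomial ℝ) (N : ℕ) (h : f.natDegree < N) :
    Bop f = ∑ j ∈ range N, Polynomial.C (f.coeff j) * binomChoosePoly j :=
  f.sum_over_range' (fun n => by simp) N h

lemma Bop_add (f g : Polynomial ℝ) : Bop (f + g) = Bop f + Bop g := by
  have h := Nat.lt_succ_of_le (natDegree_add_le f g)
  rw [Bop_eq (f + g) _ h,
    Bop_eq f _ (Nat.lt_succ_of_le (le_max_left _ _)),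
    Bop_eq g _ (Nat.lt_succ_of_le (le_max_right _ _)), ← Finset.sum_add_distrib]
  refine Finset.sum_congr rfl fun j _ => ?_
  rw [coeff_add, Polynomial.C_add, add_mul]

lemma Bop_zero : Bop 0 = 0 := by simp [Bop]

lemma Bop_sum {ι : Type*} (s : Finset ι) (F : ι → Polynomial ℝ) :
    Bop (∑ a ∈ s, F a) = ∑ a ∈ s, Bop (F a) := by
  classical
  induction s using Finset.induction_on with
  | empty => simp [Bop_zero]
  | insert _ _ h ih => rw [Finset.sum_insert h, Bop_add, ih, Finset.sum_insert h]

lemma Bop_C_mul (c : ℝ) (f : Polynomial ℝ) : Bop (Polynomial.C c * f) = Polynomial.C c * Bop f := by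
  have h : (Polynomial.C c * f).natDegree < f.natDegree + 1 :=
    Nat.lt_succ_of_le (natDegree_C_mul_le c f)
  rw [Bop_eq _ _ h, Bop_eq f _ (Nat.lt_succ_self _), Finset.mul_sum]
  refine Finset.sum_congr rfl fun j _ => ?_
  rw [coeff_C_mul, Polynomial.C_mul, mul_assoc]

lemma Bop_X_pow (e : ℕ) : Bop (X ^ e : Polynomial ℝ) = binomChoosePoly e := by
  rw [Bop_eq _ (e + 1) (by simp [natDegree_X_pow])]
  rw [Finset.sum_eq_single e]
  · simp
  · intro j _ hj; rw [coeff_X_pow, if_neg hj]; simp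
  · intro h; exact absurd (self_mem_range_succ e) h

noncomputable def Dn (N : ℕ) (f g : Polynomial ℝ) : Polynomial ℝ :=
  ∑ j ∈ Finset.range N,
    Polynomial.C (((j.factorial : ℝ))⁻¹ * ((j.factorial : ℝ))⁻¹) *
      (Polynomial.derivative^[j] f) * (Polynomial.derivative^[j] g) *
      (Polynomial.X * (Polynomial.X + 1)) ^ j

lemma diamond_eq_Dn (f g : Polynomial ℝ) :
    diamond f g = Dn (f.natDegree + g.natDegree + 1) f g := rfl

lemma Dn_eq_of_le (M N : ℕ) (f g : Polynomial ℝ) (hMN : M ≤ N) (h : f.natDegree < M) :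
    Dn N f g = Dn M f g := by
  refine (Finset.sum_subset (by intro x hx; simp only [mem_range] at *; omega) ?_).symm
  intro j hj hnj
  simp only [mem_range] at hj hnj
  rw [Polynomial.iterate_derivative_eq_zero (show f.natDegree < j by omega)]
  ring

lemma Dn_sum_left {ι : Type*} (N : ℕ) (s : Finset ι) (F : ι → Polynomial ℝ) (g : Polynomial ℝ) :
    Dn N (∑ a ∈ s, F a) g = ∑ a ∈ s, Dn N (F a) g := by
  unfold Dn
  rw [Finset.sum_comm]
  refine Finset.sum_congr rfl fun j _ => ?_
  rw [Polynomial.iterate_derivative_sum, Finset.mul_sum, Finset.sum_mul, Finset.sum_mul]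

lemma Dn_sum_right {ι : Type*} (N : ℕ) (s : Finset ι) (f : Polynomial ℝ) (F : ι → Polynomial ℝ) :
    Dn N f (∑ a ∈ s, F a) = ∑ a ∈ s, Dn N f (F a) := by
  unfold Dn
  rw [Finset.sum_comm]
  refine Finset.sum_congr rfl fun j _ => ?_
  rw [Polynomial.iterate_derivative_sum, Finset.mul_sum, Finset.sum_mul]

lemma Dn_C_mul_left (N : ℕ) (c : ℝ) (f g : Polynomial ℝ) :
    Dn N (Polynomial.C c * f) g = Polynomial.C c * Dn N f g := by
  unfold Dn
  rw [Finset.mul_sum]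
  refine Finset.sum_congr rfl fun j _ => ?_
  rw [Polynomial.iterate_derivative_C_mul]
  ring

lemma Dn_C_mul_right (N : ℕ) (c : ℝ) (f g : Polynomial ℝ) :
    Dn N f (Polynomial.C c * g) = Polynomial.C c * Dn N f g := by
  unfold Dn
  rw [Finset.mul_sum]
  refine Finset.sum_congr rfl fun j _ => ?_
  rw [Polynomial.iterate_derivative_C_mul]
  ring

lemma Dn_monomial (a b N : ℕ) :
    Dn N (X ^ a) (X ^ b) = ∑ j ∈ range N, ∑ i ∈ range (j + 1),
      Polynomial.C ((a.choose j * b.choose j * j.choose i : ℕ) : ℝ) *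
        X ^ (a - j + (b - j) + j + i) := by
  unfold Dn
  refine Finset.sum_congr rfl fun j _ => ?_
  have hxj : ((X : Polynomial ℝ) * (X + 1)) ^ j
      = ∑ i ∈ range (j + 1), Polynomial.C ((j.choose i : ℕ) : ℝ) * X ^ (j + i) := by
    rw [mul_pow, add_pow, Finset.mul_sum]
    refine Finset.sum_congr rfl fun i _ => ?_
    rw [one_pow, pow_add, Polynomial.C_eq_natCast]
    ring
  rw [Polynomial.iterate_derivative_X_pow_eq_C_mul, Polynomial.iterate_derivative_X_pow_eq_C_mul,
    hxj, Finset.mul_sum]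
  refine Finset.sum_congr rfl fun i hi => ?_
  have hj : (j.factorial : ℝ) ≠ 0 := by positivity
  have hsc : ((j.factorial : ℝ))⁻¹ * ((j.factorial : ℝ))⁻¹ *
      ((a.descFactorial j : ℕ) : ℝ) * ((b.descFactorial j : ℕ) : ℝ) * ((j.choose i : ℕ) : ℝ)
      = ((a.choose j * b.choose j * j.choose i : ℕ) : ℝ) := by
    rw [Nat.descFactorial_eq_factorial_mul_choose, Nat.descFactorial_eq_factorial_mul_choose]
    push_cast
    field_simp
  calc Polynomial.C (((j.factorial : ℝ))⁻¹ * ((j.factorial : ℝ))⁻¹) *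
        (Polynomial.C ((a.descFactorial j : ℕ) : ℝ) * X ^ (a - j)) *
        (Polynomial.C ((b.descFactorial j : ℕ) : ℝ) * X ^ (b - j)) *
        (Polynomial.C ((j.choose i : ℕ) : ℝ) * X ^ (j + i))
      = Polynomial.C (((j.factorial : ℝ))⁻¹ * ((j.factorial : ℝ))⁻¹ *
          ((a.descFactorial j : ℕ) : ℝ) * ((b.descFactorial j : ℕ) : ℝ) * ((j.choose i : ℕ) : ℝ)) *
          (X ^ (a - j) * X ^ (b - j) * X ^ (j + i)) := by
        simp only [Polynomial.C_mul]
        ring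
    _ = Polynomial.C ((a.choose j * b.choose j * j.choose i : ℕ) : ℝ) *
          X ^ (a - j + (b - j) + j + i) := by
        rw [hsc, ← pow_add, ← pow_add,
          show a - j + (b - j) + (j + i) = a - j + (b - j) + j + i from by omega]

lemma mono_lemma (a b N : ℕ) (hN : a < N) :
    binomChoosePoly a * binomChoosePoly b = Bop (Dn N (X ^ a) (X ^ b)) := by
  rw [Dn_monomial, Bop_sum]
  simp_rw [Bop_sum, Bop_C_mul, Bop_X_pow]
  apply Polynomial.eq_of_infinite_eval_eq
  refine Set.Infinite.mono ?_ (Set.infinite_range_of_injective (Nat.cast_injective (R := ℝ)))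
  rintro x ⟨n, rfl⟩
  simp only [Set.mem_setOf_eq, eval_mul, binom_eval, eval_finset_sum, eval_C]
  exact_mod_cast Anat n a b N hN

lemma key_bilin (N : ℕ) (s t : Finset ℕ) (F G : ℕ → ℝ) (hs : ∀ a ∈ s, a < N) :
    Bop (∑ a ∈ s, Polynomial.C (F a) * X ^ a) * Bop (∑ b ∈ t, Polynomial.C (G b) * X ^ b)
      = Bop (Dn N (∑ a ∈ s, Polynomial.C (F a) * X ^ a)
          (∑ b ∈ t, Polynomial.C (G b) * X ^ b)) := by
  have lhs_eq : Bop (∑ a ∈ s, Polynomial.C (F a) * X ^ a) *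
      Bop (∑ b ∈ t, Polynomial.C (G b) * X ^ b)
      = ∑ a ∈ s, ∑ b ∈ t,
          Polynomial.C (F a) * (Polynomial.C (G b) * Bop (Dn N (X ^ a) (X ^ b))) := by
    rw [Bop_sum, Bop_sum, Finset.sum_mul_sum]
    refine Finset.sum_congr rfl fun a ha => Finset.sum_congr rfl fun b _ => ?_
    rw [Bop_C_mul, Bop_C_mul, Bop_X_pow, Bop_X_pow, mul_mul_mul_comm,
      mono_lemma a b N (hs a ha)]
    ring
  rw [lhs_eq, Dn_sum_left, Bop_sum]
  refine Finset.sum_congr rfl fun a _ => ?_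
  rw [Dn_C_mul_left, Bop_C_mul, Dn_sum_right, Bop_sum, Finset.mul_sum]
  refine Finset.sum_congr rfl fun b _ => ?_
  rw [Dn_C_mul_right, Bop_C_mul]



/-- The subdivision operator `ℰ` sends `(x choose j) ↦ x^j`; equivalently,
`ℰ(p) = f` means `p = ∑_j f_j (x choose j)`.  For all polynomials `p, q`:
`ℰ(pq) = ℰ(p) ⋄ ℰ(q)`. -/
theorem subdivision_diamond (p q f g : Polynomial ℝ)
    (hf : p = ∑ j ∈ Finset.range (f.natDegree + 1),
      Polynomial.C (f.coeff j) * binomChoosePoly j)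
    (hg : q = ∑ j ∈ Finset.range (g.natDegree + 1),
      Polynomial.C (g.coeff j) * binomChoosePoly j) :
    p * q = ∑ j ∈ Finset.range ((diamond f g).natDegree + 1),
      Polynomial.C ((diamond f g).coeff j) * binomChoosePoly j := by
  rw [hf, hg, ← Bop_eq f _ (Nat.lt_succ_self _), ← Bop_eq g _ (Nat.lt_succ_self _),
    ← Bop_eq (diamond f g) _ (Nat.lt_succ_self _), diamond_eq_Dn]
  have hs : ∀ a ∈ range (f.natDegree + 1), a < f.natDegree + g.natDegree + 1 := by
    intro a ha; simp only [mem_range] at ha; omega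
  have key := key_bilin (f.natDegree + g.natDegree + 1) (range (f.natDegree + 1))
    (range (g.natDegree + 1)) f.coeff g.coeff hs
  rw [← f.as_sum_range_C_mul_X_pow, ← g.as_sum_range_C_mul_X_pow] at key
  exact key
end
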